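/- arXiv:1111.2301 — 5 statements merged into one kernel-verified Lean document; each statement's English description precedes it below -/
import Mathlib

section
/- Let C be a linear code of length n and dimension k over a finite field F_q that is perfect with radius ρ (i.e., every vector of F_q^n lies at Hamming distance at most ρ from exactly one codeword of C), and let S : F_q^n → F_q^{n-k-r} × F_q^r be a surjective linear map whose kernel is C, for some integer 0 ≤ r ≤ n-k. Suppose the inequality q^{n-k} + 1 ≤ q^r + Σ_{i=0}^{ρ} (q-1)^i · C(n-ℓ, i) holds, where ℓ is a nonnegative integer with ℓ ≤ n. Then for every cover-data x ∈ F_q^n, every message m ∈ F_q^{n-k-r}, and every set I ⊆ {1,…,n} of locked coordinates with |I| = ℓ, there exist a vector y ∈ F_q^n and a vector R ∈ F_q^r such that S(y) = (m, R), d(x,y) ≤ ρ, and y_i = x_i for all i ∈ I. -/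
/-!
Two vectors of the locked ball `{y | d(x,y) ≤ ρ, y = x on I}` with the same syndrome differ by
a codeword and are both within `ρ` of `x`, so by perfectness of `C` they coincide: `S` is
injective on the locked ball, whose size is `∑_{i ≤ ρ} (q-1)^i C(n-ℓ, i)`. Only
`q^(n-k) - q^r` syndromes have first component different from `m`, so the hypothesis forces
one of the syndromes of the locked ball to start with `m`.
-/

open Finset

section HammingCount

variable {ι β : Type*} [Fintype ι] [DecidableEq ι] [Fintype β] [DecidableEq β]

theorem card_filter_diffSet_eq (x : ι → β) (s : Finset ι) :
    #{y : ι → β | ({j | x j ≠ y j} : Finset ι) = s} = (Fintype.card β - 1) ^ #s := by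
  have hpi : ({y : ι → β | ({j | x j ≠ y j} : Finset ι) = s} : Finset (ι → β)) =
      Fintype.piFinset fun j => if j ∈ s then univ.erase (x j) else {x j} := by
    ext y
    simp only [mem_filter, mem_univ, true_and, Fintype.mem_piFinset, Finset.ext_iff]
    refine forall_congr' fun j => ?_
    by_cases hj : j ∈ s <;> simp [hj, eq_comm]
  simp only [hpi, Fintype.card_piFinset, apply_ite card, card_erase_of_mem (mem_univ _),
    card_singleton, card_univ]
  rw [prod_ite_mem, univ_inter, prod_const]

theorem card_filter_hammingDist_eq_and_eqOn (x : ι → β) (I : Finset ι) (i : ℕ) :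
    #{y : ι → β | hammingDist x y = i ∧ ∀ j ∈ I, y j = x j} =
      (Fintype.card β - 1) ^ i * (Fintype.card ι - #I).choose i := by
  rw [card_eq_sum_card_fiberwise (f := fun y => ({j | x j ≠ y j} : Finset ι))
    (t := powersetCard i Iᶜ)]
  · have hfiber : ∀ s ∈ powersetCard i Iᶜ,
        #{y ∈ ({y : ι → β | hammingDist x y = i ∧ ∀ j ∈ I, y j = x j} : Finset _) |
          ({j | x j ≠ y j} : Finset ι) = s} = (Fintype.card β - 1) ^ i := by
      intro s hs
      obtain ⟨hsI, hsi⟩ := mem_powersetCard.1 hs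
      rw [filter_filter, ← hsi, ← card_filter_diffSet_eq x s]
      congr 1
      refine filter_congr fun y _ => and_iff_right_of_imp fun hy => ⟨?_, fun j hj => ?_⟩
      · rw [hammingDist, hy]
      · by_contra hne
        exact mem_compl.1 (hsI (hy ▸ mem_filter.2 ⟨mem_univ j, Ne.symm hne⟩)) hj
    rw [sum_congr rfl hfiber, sum_const, card_powersetCard, card_compl, smul_eq_mul, mul_comm]
  · intro y hy
    obtain ⟨hdist, hI⟩ := mem_filter.1 hy |>.2
    refine mem_powersetCard.2 ⟨fun j hj => mem_compl.2 fun hjI => ?_, hdist⟩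
    exact (mem_filter.1 hj).2 (hI j hjI).symm

def lockedHammingBall (x : ι → β) (I : Finset ι) (ρ : ℕ) : Finset (ι → β) :=
  {y | hammingDist x y ≤ ρ ∧ ∀ j ∈ I, y j = x j}

theorem mem_lockedHammingBall {x y : ι → β} {I : Finset ι} {ρ : ℕ} :
    y ∈ lockedHammingBall x I ρ ↔ hammingDist x y ≤ ρ ∧ ∀ j ∈ I, y j = x j := by
  simp [lockedHammingBall]

theorem card_lockedHammingBall (x : ι → β) (I : Finset ι) (ρ : ℕ) :
    #(lockedHammingBall x I ρ) =
      ∑ i ∈ range (ρ + 1), (Fintype.card β - 1) ^ i * (Fintype.card ι - #I).choose i := by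
  rw [card_eq_sum_card_fiberwise (f := hammingDist x) (t := range (ρ + 1))]
  · refine sum_congr rfl fun i hi => ?_
    rw [← card_filter_hammingDist_eq_and_eqOn x I i]
    congr 1
    ext y
    simp only [mem_filter, mem_lockedHammingBall, mem_univ, true_and]
    have := mem_range.1 hi
    constructor
    · rintro ⟨⟨-, hI⟩, rfl⟩; exact ⟨rfl, hI⟩
    · rintro ⟨rfl, hI⟩; exact ⟨⟨by omega, hI⟩, rfl⟩
  · intro y hy
    exact mem_range.2 (Nat.lt_succ_of_le (mem_lockedHammingBall.1 hy).1)

end HammingCount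

theorem hammingDist_sub_right {ι G : Type*} [Fintype ι] [AddGroup G] [DecidableEq G]
    (x y z : ι → G) : hammingDist (x - z) (y - z) = hammingDist x y :=
  hammingDist_comp (fun _ => (· - z _)) fun _ => sub_left_injective

theorem LinearMap.injOn_hammingBall_of_perfect {ι R M : Type*} [Fintype ι] [Ring R]
    [DecidableEq R] [AddCommGroup M] [Module R M] {C : Submodule R (ι → R)} {ρ : ℕ}
    (hperf : ∀ v : ι → R, ∃! c, c ∈ C ∧ hammingDist v c ≤ ρ) (S : (ι → R) →ₗ[R] M)
    (hS : LinearMap.ker S = C) (x : ι → R) :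
    Set.InjOn S {y | hammingDist x y ≤ ρ} := by
  intro y hy y' hy' hSy
  have hC : y - y' ∈ C := by rw [← hS, LinearMap.mem_ker, map_sub, hSy, sub_self]
  have hnear : hammingDist (x - y') (y - y') ≤ ρ := by rwa [hammingDist_sub_right]
  have hnear0 : hammingDist (x - y') 0 ≤ ρ := by rwa [← sub_self y', hammingDist_sub_right]
  exact sub_eq_zero.1 ((hperf (x - y')).unique ⟨hC, hnear⟩ ⟨C.zero_mem, hnear0⟩)

theorem Set.InjOn.exists_mem_fst_eq_of_card_lt {α β γ : Type*} [Fintype β] [Fintype γ]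
    [Nonempty β] [DecidableEq β] [DecidableEq γ] {f : α → β × γ} {B : Finset α}
    (hf : Set.InjOn f B) (b : β)
    (hB : Fintype.card β * Fintype.card γ < #B + Fintype.card γ) : ∃ a ∈ B, (f a).1 = b := by
  by_contra! hnone
  have hsub : B.image f ⊆ ({b}ᶜ : Finset β) ×ˢ Finset.univ := fun t ht => by
    obtain ⟨a, ha, rfl⟩ := Finset.mem_image.1 ht
    exact Finset.mem_product.2
      ⟨Finset.mem_compl.2 fun h => hnone a ha (Finset.mem_singleton.1 h), Finset.mem_univ _⟩
  have hcard := Finset.card_le_card hsub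
  rw [Finset.card_image_of_injOn hf, Finset.card_product, Finset.card_compl,
    Finset.card_singleton, Finset.card_univ, Nat.sub_one_mul] at hcard
  have := Nat.le_mul_of_pos_left (Fintype.card γ) (Fintype.card_pos (α := β))
  omega

theorem randomized_wet_paper_of_perfect_general
    (q n k r ρ ℓ : ℕ) (F : Type) [Field F] [Fintype F] [DecidableEq F]
    (hq : Fintype.card F = q) (hr : r ≤ n - k)
    (C : Submodule F (Fin n → F))
    (hperf : ∀ v : Fin n → F, ∃! c, c ∈ C ∧ hammingDist v c ≤ ρ)
    (S : (Fin n → F) →ₗ[F] (Fin (n - k - r) → F) × (Fin r → F))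
    (hS_ker : LinearMap.ker S = C)
    (hineq : q ^ (n - k) + 1 ≤
      q ^ r + ∑ i ∈ Finset.range (ρ + 1), (q - 1) ^ i * (n - ℓ).choose i) :
    ∀ (x : Fin n → F) (m : Fin (n - k - r) → F) (I : Finset (Fin n)), I.card = ℓ →
      ∃ (y : Fin n → F) (R : Fin r → F),
        S y = (m, R) ∧ hammingDist x y ≤ ρ ∧ ∀ i ∈ I, y i = x i := by
  intro x m I hI
  set B := lockedHammingBall x I ρ
  have hinj : Set.InjOn S B :=
    (S.injOn_hammingBall_of_perfect hperf hS_ker x).mono fun _ hy =>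
      (mem_lockedHammingBall.1 hy).1
  have hB : #B = ∑ i ∈ range (ρ + 1), (q - 1) ^ i * (n - ℓ).choose i := by
    rw [card_lockedHammingBall, Fintype.card_fin, hq, hI]
  have hcodom : q ^ (n - k - r) * q ^ r = q ^ (n - k) := by rw [← pow_add, Nat.sub_add_cancel hr]
  obtain ⟨y, hy, hym⟩ := hinj.exists_mem_fst_eq_of_card_lt m (by
    simp only [Fintype.card_fun, Fintype.card_fin, hq, hcodom, hB]; omega)
  exact ⟨y, (S y).2, by rw [← hym], mem_lockedHammingBall.1 hy⟩

/-- Sufficient condition for the randomized bounded syndrome coding problem for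
wet paper to be solvable with a perfect code of radius `ρ`:
if `q^(n-k) + 1 ≤ q^r + ∑_{i=0}^{ρ} (q-1)^i C(n-ℓ, i)`, then for every cover `x`, message `m`
and set `I` of `ℓ` locked coordinates there exist `y` and a random part `R` with
`S y = (m, R)`, `d(x,y) ≤ ρ` and `y` agreeing with `x` on `I`. -/
theorem randomized_wet_paper_of_perfect
    (q n k r ρ ℓ : ℕ) (F : Type) [Field F] [Fintype F] [DecidableEq F]
    (hq : Fintype.card F = q) (hr : r ≤ n - k) (hℓ : ℓ ≤ n)
    (C : Submodule F (Fin n → F)) (hk : Module.finrank F C = k)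
    (hperf : ∀ v : Fin n → F, ∃! c, c ∈ C ∧ hammingDist v c ≤ ρ)
    (S : (Fin n → F) →ₗ[F] (Fin (n - k - r) → F) × (Fin r → F))
    (hS_surj : Function.Surjective S)
    (hS_ker : LinearMap.ker S = C)
    (hineq : q ^ (n - k) + 1 ≤
      q ^ r + ∑ i ∈ Finset.range (ρ + 1), (q - 1) ^ i * (n - ℓ).choose i) :
    ∀ (x : Fin n → F) (m : Fin (n - k - r) → F) (I : Finset (Fin n)), I.card = ℓ →
      ∃ (y : Fin n → F) (R : Fin r → F),
        S y = (m, R) ∧ hammingDist x y ≤ ρ ∧ ∀ i ∈ I, y i = x i :=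
  randomized_wet_paper_of_perfect_general q n k r ρ ℓ F hq hr C hperf S hS_ker hineq
end

section
/- Let q be a prime power, p ≥ 2 an integer, n = (q^p - 1)/(q - 1), and let C be a linear code of length n and dimension n - p over a finite field F_q that is perfect with radius 1 (i.e., every vector of F_q^n lies at Hamming distance at most 1 from exactly one codeword of C). Let S : F_q^n → F_q^{p-r} × F_q^r be a surjective linear map whose kernel is C, for some integer 0 ≤ r ≤ p. If q^r ≥ (q-1)ℓ + 1, then for every x ∈ F_q^n, every message m ∈ F_q^{p-r}, and every set I ⊆ {1,…,n} with |I| = ℓ, there exist y ∈ F_q^n and R ∈ F_q^r such that S(y) = (m, R), d(x,y) ≤ 1, and y_i = x_i for all i ∈ I. -/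
/-!
Since `C = ker S` covers `F^n` with radius 1, every syndrome `(m, R)` is realised by some `y_R`
within distance 1 of `x`: correct `x - z` to a codeword `c`, where `S z = (m, R)`, and take
`y_R = z + c`. Different `R` give different `y_R`, so there are `q^r` of them. A vector within
distance 1 of `x` that changes a locked coordinate is `x` with one coordinate `i ∈ I` changed, and
there are at most `ℓ (q - 1)` of those; as `q^r > (q - 1) ℓ`, some `y_R` leaves `I` untouched.
-/

open Finset

theorem exists_map_eq_hammingDist_le_one_of_covering {ι F M : Type*} [Fintype ι] [DecidableEq F]
    [Ring F] [AddCommGroup M] [Module F M] (S : (ι → F) →ₗ[F] M)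
    (hcover : ∀ v : ι → F, ∃ c ∈ LinearMap.ker S, hammingDist v c ≤ 1) (x z : ι → F) :
    ∃ y, S y = S z ∧ hammingDist x y ≤ 1 := by
  obtain ⟨c, hc, hdist⟩ := hcover (x - z)
  refine ⟨z + c, by rw [map_add, LinearMap.mem_ker.mp hc, add_zero], ?_⟩
  rwa [hammingDist_eq_hammingNorm, ← add_assoc, neg_add_eq_sub, ← neg_sub,
    ← hammingDist_eq_hammingNorm]

theorem eq_update_of_hammingDist_le_one {ι β : Type*} [Fintype ι] [DecidableEq ι] [DecidableEq β]
    {x y : ι → β} (h : hammingDist x y ≤ 1) {i : ι} (hi : y i ≠ x i) :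
    y = Function.update x i (y i) := by
  funext j
  by_cases hj : j = i
  · subst hj; simp
  rw [Function.update_of_ne hj]
  by_contra hne
  have : 1 < #{k | x k ≠ y k} :=
    one_lt_card.mpr ⟨i, by simpa using (Ne.symm hi), j, by simpa using (Ne.symm hne), Ne.symm hj⟩
  exact h.not_gt this

theorem card_filter_hammingDist_le_one_exists_ne_le {ι β : Type*} [Fintype ι] [DecidableEq ι] [Fintype β]
    [DecidableEq β] (x : ι → β) (I : Finset ι) :
    #{y | hammingDist x y ≤ 1 ∧ ∃ i ∈ I, y i ≠ x i} ≤ #I * (Fintype.card β - 1) := by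
  calc #{y | hammingDist x y ≤ 1 ∧ ∃ i ∈ I, y i ≠ x i}
      ≤ #(I.biUnion fun i => (univ.erase (x i)).image (Function.update x i)) := by
        refine card_le_card fun y hy => ?_
        obtain ⟨hdist, i, hiI, hi⟩ := (mem_filter.mp hy).2
        exact mem_biUnion.mpr ⟨i, hiI, mem_image.mpr
          ⟨y i, mem_erase.mpr ⟨hi, mem_univ _⟩, (eq_update_of_hammingDist_le_one hdist hi).symm⟩⟩
    _ ≤ ∑ i ∈ I, #((univ.erase (x i)).image (Function.update x i)) := card_biUnion_le
    _ ≤ ∑ i ∈ I, (Fintype.card β - 1) := sum_le_sum fun i _ => by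
        simpa [card_erase_of_mem] using card_image_le (s := univ.erase (x i))
    _ = #I * (Fintype.card β - 1) := by rw [sum_const, smul_eq_mul]

theorem randomized_wet_paper_hamming_code_general
    (q p n r ℓ : ℕ) (F : Type) [Field F] [Fintype F] [DecidableEq F]
    (hq : Fintype.card F = q)
    (C : Submodule F (Fin n → F))
    (hperf : ∀ v : Fin n → F, ∃! c, c ∈ C ∧ hammingDist v c ≤ 1)
    (S : (Fin n → F) →ₗ[F] (Fin (p - r) → F) × (Fin r → F))
    (hS_surj : Function.Surjective S)
    (hS_ker : LinearMap.ker S = C)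
    (hineq : (q - 1) * ℓ + 1 ≤ q ^ r) :
    ∀ (x : Fin n → F) (m : Fin (p - r) → F) (I : Finset (Fin n)), I.card = ℓ →
      ∃ (y : Fin n → F) (R : Fin r → F),
        S y = (m, R) ∧ hammingDist x y ≤ 1 ∧ ∀ i ∈ I, y i = x i := by
  intro x m I hI
  have hcover : ∀ v, ∃ c ∈ LinearMap.ker S, hammingDist v c ≤ 1 := fun v => by
    obtain ⟨c, ⟨hc, hdist⟩, -⟩ := hperf v
    exact ⟨c, hS_ker ▸ hc, hdist⟩
  have hsyn : ∀ R : Fin r → F, ∃ y, S y = (m, R) ∧ hammingDist x y ≤ 1 := fun R => by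
    obtain ⟨z, hz⟩ := hS_surj (m, R)
    simpa only [hz] using exists_map_eq_hammingDist_le_one_of_covering S hcover x z
  choose f hfS hfdist using hsyn
  have hf_inj : Function.Injective f := fun R R' h =>
    congrArg Prod.snd ((hfS R).symm.trans (h ▸ hfS R'))
  by_contra! hlocked
  have hcard : Fintype.card (Fin r → F) ≤ #I * (q - 1) := by
    rw [← hq, ← card_univ]
    refine (card_le_card_of_injOn f (fun R _ => ?_) hf_inj.injOn).trans
      (card_filter_hammingDist_le_one_exists_ne_le x I)
    simpa using ⟨hfdist R, hlocked (f R) R (hfS R) (hfdist R)⟩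
  rw [Fintype.card_fun, Fintype.card_fin, hq, hI] at hcard
  nlinarith

/-- With the q-ary Hamming code of length `n = (q^p-1)/(q-1)` (perfect with
radius 1), if `q^r ≥ (q-1)ℓ + 1`, the randomized wet paper syndrome coding problem always
has a solution for any `ℓ` locked coordinates. -/
theorem randomized_wet_paper_hamming_code
    (q p n r ℓ : ℕ) (F : Type) [Field F] [Fintype F] [DecidableEq F]
    (hq : Fintype.card F = q) (hp : 2 ≤ p) (hn : n = (q ^ p - 1) / (q - 1)) (hr : r ≤ p)
    (C : Submodule F (Fin n → F)) (hk : Module.finrank F C = n - p)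
    (hperf : ∀ v : Fin n → F, ∃! c, c ∈ C ∧ hammingDist v c ≤ 1)
    (S : (Fin n → F) →ₗ[F] (Fin (p - r) → F) × (Fin r → F))
    (hS_surj : Function.Surjective S)
    (hS_ker : LinearMap.ker S = C)
    (hineq : (q - 1) * ℓ + 1 ≤ q ^ r) :
    ∀ (x : Fin n → F) (m : Fin (p - r) → F) (I : Finset (Fin n)), I.card = ℓ →
      ∃ (y : Fin n → F) (R : Fin r → F),
        S y = (m, R) ∧ hammingDist x y ≤ 1 ∧ ∀ i ∈ I, y i = x i :=
  randomized_wet_paper_hamming_code_general q p n r ℓ F hq C hperf S hS_surj hS_ker hineq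
end

section
/- Let q be a prime power, p ≥ 2 an integer, n = (q^p - 1)/(q - 1), and let C be a linear code of length n and dimension n - p over a finite field F_q that is perfect with radius 1. Let S : F_q^n → F_q × F_q^{p-1} be a surjective linear map whose kernel is C. If ℓ ≤ (q^{p-1} - 1)/(q - 1), then for every x ∈ F_q^n, every message symbol m ∈ F_q, and every set I ⊆ {1,…,n} with |I| = ℓ, there exist y ∈ F_q^n and R ∈ F_q^{p-1} such that S(y) = (m, R), d(x,y) ≤ 1, and y_i = x_i for all i ∈ I. In other words, using a Hamming code one can always embed at least one information symbol whenever at most a fraction (q^{p-1}-1)/((q-1)·n) ≈ 1/q of the coordinates are locked. -/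
/-!
Perfectness makes the syndrome map injective on the vectors of weight at most one. Call a
coordinate `i` blind if the first syndrome symbol of the unit vector `eᵢ` vanishes. The vectors `0`
and `a • eᵢ` (`i` blind, `a ≠ 0`) are then sent injectively into `0 × F^(p-1)`, so there are at
most `(q^(p-1) - 1)/(q - 1)` blind coordinates. As `n = q · (q^(p-1) - 1)/(q - 1) + 1`, some
coordinate `i ∉ I` is not blind, and changing `x` at `i` alone sets the first syndrome symbol
to `m`.
-/

open Finset

theorem hammingNorm_single_le_one {ι M : Type*} [Fintype ι] [DecidableEq ι] [Zero M]
    [DecidableEq M] (i : ι) (a : M) : hammingNorm (Pi.single i a : ι → M) ≤ 1 :=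
  card_le_one.2 fun j hj k hk => by
    simp only [mem_filter, mem_univ, true_and] at hj hk
    rw [Pi.single_apply] at hj hk
    split_ifs at hj hk <;> simp_all

theorem LinearMap.apply_single_eq_smul {ι R M : Type*} [DecidableEq ι] [Semiring R]
    [AddCommMonoid M] [Module R M] (f : (ι → R) →ₗ[R] M) (i : ι) (a : R) :
    f (Pi.single i a) = a • f (Pi.single i 1) := by
  rw [← f.map_smul, ← Pi.single_smul', smul_eq_mul, mul_one]

theorem LinearMap.injOn_hammingNorm_le_one_of_ker_le {ι R M N : Type*} [Fintype ι] [Ring R]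
    [AddCommGroup M] [Module R M] [DecidableEq M] [AddCommGroup N] [Module R N]
    {C : Submodule R (ι → M)} (hC : ∀ v, ∃! c, c ∈ C ∧ hammingDist v c ≤ 1)
    {S : (ι → M) →ₗ[R] N} (hS : LinearMap.ker S ≤ C) :
    Set.InjOn S {w | hammingNorm w ≤ 1} := by
  intro w₁ hw₁ w₂ hw₂ h
  have hmem : w₁ - w₂ ∈ C := hS <| by rw [LinearMap.mem_ker, map_sub, h, sub_self]
  obtain ⟨c, -, huniq⟩ := hC w₁
  have h₀ : 0 = c := huniq 0 ⟨C.zero_mem, by rwa [hammingDist_zero_right]⟩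
  have h₁ : w₁ - w₂ = c :=
    huniq _ ⟨hmem, by
      rwa [hammingDist_comm, hammingDist_eq_hammingNorm, neg_sub, sub_add_cancel]⟩
  exact sub_eq_zero.1 (h₁.trans h₀.symm)

theorem Pi.eq_and_eq_of_single_eq_single {ι M : Type*} [DecidableEq ι] [Zero M] {i j : ι}
    {a b : M} (ha : a ≠ 0) (h : (Pi.single i a : ι → M) = Pi.single j b) : i = j ∧ a = b := by
  obtain rfl : i = j := by
    by_contra hij
    exact ha (by simpa [hij] using congrFun h i)
  exact ⟨rfl, Pi.single_injective i h⟩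

theorem card_filter_fst_single_eq_zero_mul_add_one_le {ι K M U : Type*} [Fintype ι]
    [DecidableEq ι] [Semiring K] [Fintype K] [DecidableEq K] [AddCommMonoid M] [Module K M]
    [DecidableEq M] [AddCommMonoid U] [Module K U] [Fintype U]
    (T : (ι → K) →ₗ[K] M × U) (hT : Set.InjOn T {w | hammingNorm w ≤ 1}) :
    #{i | (T (Pi.single i 1)).1 = 0} * (Fintype.card K - 1) + 1 ≤ Fintype.card U := by
  set Z : Finset ι := {i | (T (Pi.single i 1)).1 = 0}
  let v : Option (Z × {a : K // a ≠ 0}) → ι → K :=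
    fun o => o.elim 0 fun ia => Pi.single ia.1 ia.2
  have hv : Function.Injective v := by
    rintro (_ | ⟨i, a⟩) (_ | ⟨j, b⟩) h
    · rfl
    · exact absurd (Pi.single_eq_zero_iff.1 h.symm) b.2
    · exact absurd (Pi.single_eq_zero_iff.1 h) a.2
    · obtain ⟨hij, hab⟩ := Pi.eq_and_eq_of_single_eq_single a.2 h
      simp only [Option.some.injEq, Prod.mk.injEq]
      exact ⟨Subtype.ext hij, Subtype.ext hab⟩
  have hvnorm : ∀ o, hammingNorm (v o) ≤ 1 := by
    rintro (_ | ⟨i, a⟩)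
    · simp [v]
    · exact hammingNorm_single_le_one _ _
  have hTv : ∀ o, (T (v o)).1 = 0 := by
    rintro (_ | ⟨⟨i, hi⟩, a⟩)
    · simp [v]
    · have hi : (T (Pi.single i 1)).1 = 0 := (mem_filter.1 hi).2
      simp only [v, Option.elim]
      rw [T.apply_single_eq_smul, Prod.smul_fst, hi, smul_zero]
  have := Fintype.card_le_of_injective (fun o => (T (v o)).2) fun o₁ o₂ h =>
    hv <| hT (hvnorm o₁) (hvnorm o₂) (Prod.ext ((hTv o₁).trans (hTv o₂).symm) h)
  simpa [Fintype.card_subtype_compl, Fintype.card_subtype_eq] using this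

theorem Nat.pow_succ_sub_one_div {q : ℕ} (hq : 2 ≤ q) (k : ℕ) :
    (q ^ (k + 1) - 1) / (q - 1) = q * ((q ^ k - 1) / (q - 1)) + 1 := by
  rw [← Nat.geomSum_eq hq, ← Nat.geomSum_eq hq, sum_range_succ', mul_sum]
  simp [pow_succ']

theorem exists_hammingDist_le_one_apply_eq {ι K : Type*} [Fintype ι] [DecidableEq ι] [Field K]
    [DecidableEq K] (f : (ι → K) →ₗ[K] K) {i : ι} (hi : f (Pi.single i 1) ≠ 0)
    (x : ι → K) (m : K) : ∃ y, f y = m ∧ hammingDist x y ≤ 1 ∧ ∀ j ≠ i, y j = x j := by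
  set a := (m - f x) / f (Pi.single i 1)
  refine ⟨x + Pi.single i a, ?_, ?_, fun j hj => by simp [hj]⟩
  · rw [map_add, f.apply_single_eq_smul, smul_eq_mul, div_mul_cancel₀ _ hi, add_sub_cancel]
  · rw [hammingDist_eq_hammingNorm, neg_add_cancel_left]
    exact hammingNorm_single_le_one i a

theorem hamming_code_embed_one_symbol_general
    (q p n ℓ : ℕ) (F : Type) [Field F] [Fintype F] [DecidableEq F]
    (hq : Fintype.card F = q) (hp : 2 ≤ p) (hn : n = (q ^ p - 1) / (q - 1))
    (C : Submodule F (Fin n → F))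
    (hperf : ∀ v : Fin n → F, ∃! c, c ∈ C ∧ hammingDist v c ≤ 1)
    (S : (Fin n → F) →ₗ[F] F × (Fin (p - 1) → F))
    (hS_ker : LinearMap.ker S = C)
    (hℓ : ℓ ≤ (q ^ (p - 1) - 1) / (q - 1)) :
    ∀ (x : Fin n → F) (m : F) (I : Finset (Fin n)), I.card = ℓ →
      ∃ (y : Fin n → F) (R : Fin (p - 1) → F),
        S y = (m, R) ∧ hammingDist x y ≤ 1 ∧ ∀ i ∈ I, y i = x i := by
  intro x m I hI
  have hq2 : 2 ≤ q := hq ▸ Fintype.one_lt_card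
  set t := (q ^ (p - 1) - 1) / (q - 1)
  set Z : Finset (Fin n) := {i | (S (Pi.single i 1)).1 = 0}
  have hZ : #Z ≤ t := (Nat.le_div_iff_mul_le (by omega)).2 <| Nat.le_sub_of_add_le <| by
    simpa [hq] using card_filter_fst_single_eq_zero_mul_add_one_le S
      (LinearMap.injOn_hammingNorm_le_one_of_ker_le hperf hS_ker.le)
  have hnt : n = q * t + 1 := by
    rw [hn, ← Nat.pow_succ_sub_one_div hq2, Nat.sub_add_cancel (by omega)]
  have hIZ : #(I ∪ Z) < #(univ : Finset (Fin n)) := by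
    calc #(I ∪ Z) ≤ #I + #Z := card_union_le I Z
      _ < n := by nlinarith
      _ = #univ := by simp
  obtain ⟨i, -, hi⟩ := exists_mem_notMem_of_card_lt_card hIZ
  rw [mem_union, not_or] at hi
  obtain ⟨y, hy, hxy, hyx⟩ :=
    exists_hammingDist_le_one_apply_eq (LinearMap.fst F F _ ∘ₗ S) (by simpa [Z] using hi.2) x m
  exact ⟨y, (S y).2, Prod.ext hy rfl, hxy, fun j hj => hyx j (ne_of_mem_of_not_mem hj hi.1)⟩

/-- With the q-ary Hamming code of length `n = (q^p-1)/(q-1)` and `r = p - 1`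
randomized syndrome symbols, one can always embed at least one information symbol whenever
at most `(q^(p-1)-1)/(q-1) ≈ n/q` coordinates are locked. -/
theorem hamming_code_embed_one_symbol
    (q p n ℓ : ℕ) (F : Type) [Field F] [Fintype F] [DecidableEq F]
    (hq : Fintype.card F = q) (hp : 2 ≤ p) (hn : n = (q ^ p - 1) / (q - 1))
    (C : Submodule F (Fin n → F)) (hk : Module.finrank F C = n - p)
    (hperf : ∀ v : Fin n → F, ∃! c, c ∈ C ∧ hammingDist v c ≤ 1)
    (S : (Fin n → F) →ₗ[F] F × (Fin (p - 1) → F))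
    (hS_surj : Function.Surjective S)
    (hS_ker : LinearMap.ker S = C)
    (hℓ : ℓ ≤ (q ^ (p - 1) - 1) / (q - 1)) :
    ∀ (x : Fin n → F) (m : F) (I : Finset (Fin n)), I.card = ℓ →
      ∃ (y : Fin n → F) (R : Fin (p - 1) → F),
        S y = (m, R) ∧ hammingDist x y ≤ 1 ∧ ∀ i ∈ I, y i = x i :=
  hamming_code_embed_one_symbol_general q p n ℓ F hq hp hn C hperf S hS_ker hℓ
end

section
/- Let C be a ternary linear code of length 11 and dimension 6 over F_3 that is perfect with radius 2 (i.e., every vector of F_3^11 lies at Hamming distance at most 2 from exactly one codeword of C), and let S : F_3^11 → F_3^{5-r} × F_3^r be a surjective linear map whose kernel is C, for some 0 ≤ r ≤ 5. If ℓ ≤ 11 and 3^r ≥ 1 + 44·ℓ - 2·ℓ², then for every x ∈ F_3^11, every message m ∈ F_3^{5-r}, and every set I ⊆ {1,…,11} with |I| = ℓ, there exist y ∈ F_3^11 and R ∈ F_3^r such that S(y) = (m, R), d(x,y) ≤ 2, and y_i = x_i for all i ∈ I. -/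
/-!
Every syndrome `t` is `S e` for some error `e` of weight at most `2`: pick `v` with `S v = t` and
subtract its nearest codeword. Fix the message part `m - (S x).1`; the `3 ^ r` random parts give
`3 ^ r` distinct such errors. Among the `3 ^ 5` vectors of weight at most `2`, exactly
`2 (11 - ℓ) ^ 2 + 1` vanish on `I`, so when `3 ^ r > 44 ℓ - 2 ℓ ^ 2` one of these errors `e`
vanishes on `I`, and `y = x + e` solves the wet paper problem.
-/

open Finset Function

section HammingBall

variable {ι K : Type*} [Fintype ι] [DecidableEq ι] [Zero K] [DecidableEq K]

theorem hammingNorm_update_zero_add_one {f : ι → K} {i : ι} (hf : f i ≠ 0) :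
    hammingNorm (update f i 0) + 1 = hammingNorm f := by
  have hsupp : ({j | update f i 0 j ≠ 0} : Finset ι) = ({j | f j ≠ 0} : Finset ι).erase i := by
    ext j
    by_cases hj : j = i <;> simp [hj]
  rw [hammingNorm, hammingNorm, hsupp, card_erase_add_one (by simpa using hf)]

variable [Fintype K]

variable (K) in
def hammingBallOn (s : Finset ι) (k : ℕ) : Finset (ι → K) :=
  {e | hammingNorm e ≤ k ∧ ∀ i ∉ s, e i = 0}

@[simp]
theorem mem_hammingBallOn {s : Finset ι} {k : ℕ} {e : ι → K} :
    e ∈ hammingBallOn K s k ↔ hammingNorm e ≤ k ∧ ∀ i ∉ s, e i = 0 := by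
  simp [hammingBallOn]

theorem hammingBallOn_empty (k : ℕ) : hammingBallOn K (∅ : Finset ι) k = {0} := by
  ext e
  simp only [mem_hammingBallOn, notMem_empty, not_false_eq_true, forall_const, mem_singleton]
  exact ⟨fun h => funext h.2, fun he => ⟨by simp [he], fun i => by simp [he]⟩⟩

theorem hammingBallOn_zero (s : Finset ι) : hammingBallOn K s 0 = {0} := by
  ext e
  simp only [mem_hammingBallOn, Nat.le_zero, hammingNorm_eq_zero, mem_singleton]
  exact ⟨And.left, fun he => ⟨he, fun i _ => by simp [he]⟩⟩

theorem filter_hammingBallOn_insert_apply_eq_zero {s : Finset ι} {i : ι} (hi : i ∉ s) (k : ℕ) :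
    {e ∈ hammingBallOn K (insert i s) k | e i = 0} = hammingBallOn K s k := by
  ext e
  simp only [mem_filter, mem_hammingBallOn, mem_insert, not_or]
  constructor
  · rintro ⟨⟨hk, hs⟩, hei⟩
    refine ⟨hk, fun j hj => ?_⟩
    by_cases hji : j = i
    · rwa [hji]
    · exact hs j ⟨hji, hj⟩
  · rintro ⟨hk, hs⟩
    exact ⟨⟨hk, fun j hj => hs j hj.2⟩, hs i hi⟩

theorem card_filter_hammingBallOn_insert_apply_eq {s : Finset ι} {i : ι} (hi : i ∉ s) (k : ℕ)
    {a : K} (ha : a ≠ 0) :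
    #{e ∈ hammingBallOn K (insert i s) (k + 1) | e i = a} = #(hammingBallOn K s k) := by
  refine card_bij' (fun e _ => update e i 0) (fun g _ => update g i a) ?_ ?_ ?_ ?_
  · rintro e he
    simp only [mem_filter, mem_hammingBallOn, mem_insert, not_or] at he ⊢
    obtain ⟨⟨hk, hs⟩, hei⟩ := he
    have := hammingNorm_update_zero_add_one (hei ▸ ha)
    refine ⟨by omega, fun j hj => ?_⟩
    by_cases hji : j = i
    · simp [hji]
    · simpa [hji] using hs j ⟨hji, hj⟩
  · rintro g hg
    rw [mem_hammingBallOn] at hg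
    obtain ⟨hk, hs⟩ := hg
    have hgi : g i = 0 := hs i hi
    have := hammingNorm_update_zero_add_one (f := update g i a) (i := i) (by simpa using ha)
    rw [update_idem, update_eq_self_iff.mpr hgi.symm] at this
    simp only [mem_filter, mem_hammingBallOn, mem_insert, not_or, update_self, and_true]
    refine ⟨by omega, fun j hj => ?_⟩
    simpa [hj.1] using hs j hj.2
  · rintro e he
    rw [mem_filter] at he
    rw [update_idem, ← he.2, update_eq_self]
  · rintro g hg
    rw [mem_hammingBallOn] at hg
    rw [update_idem, ← hg.2 i hi, update_eq_self]

theorem card_hammingBallOn_insert {s : Finset ι} {i : ι} (hi : i ∉ s) (k : ℕ) :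
    #(hammingBallOn K (insert i s) (k + 1)) =
      #(hammingBallOn K s (k + 1)) + (Fintype.card K - 1) * #(hammingBallOn K s k) := by
  rw [card_eq_sum_card_fiberwise (f := fun e => e i) (t := univ) (fun _ _ => mem_univ _),
    ← add_sum_erase _ _ (mem_univ 0), filter_hammingBallOn_insert_apply_eq_zero hi,
    sum_congr rfl fun a ha => card_filter_hammingBallOn_insert_apply_eq hi k (ne_of_mem_erase ha),
    sum_const, card_erase_of_mem (mem_univ _), card_univ, smul_eq_mul]

theorem card_hammingBallOn (s : Finset ι) (k : ℕ) :
    #(hammingBallOn K s k) = ∑ j ∈ range (k + 1), (#s).choose j * (Fintype.card K - 1) ^ j := by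
  induction s using Finset.induction_on generalizing k with
  | empty =>
    rw [hammingBallOn_empty, sum_range_succ']
    simp
  | insert i s hi ih =>
    cases k with
    | zero => simp [hammingBallOn_zero]
    | succ k =>
      rw [card_hammingBallOn_insert hi, ih, ih, card_insert_of_notMem hi,
        sum_range_succ' _ (k + 1), sum_range_succ' _ (k + 1), mul_sum]
      simp only [Nat.choose_succ_succ, Nat.succ_eq_add_one, Nat.choose_zero_right, add_mul,
        sum_add_distrib, pow_succ]
      ring_nf
      ac_rfl

theorem exists_mem_hammingBallOn_fst_eq {M N : Type*} [Fintype N] {S : (ι → K) → M × N}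
    {ρ : ℕ}
    (hS : ∀ t, ∃ e, hammingNorm e ≤ ρ ∧ S e = t) (m : M) (s : Finset ι)
    (hcard : #(hammingBallOn K (univ : Finset ι) ρ) < Fintype.card N + #(hammingBallOn K s ρ)) :
    ∃ e ∈ hammingBallOn K s ρ, (S e).1 = m := by
  choose F hFρ hF using fun R : N => hS (m, R)
  have hFinj : Injective F := fun R R' h => by simpa [hF] using congrArg (Prod.snd ∘ S) h
  by_contra! hnone
  have hFout : ∀ R, F R ∈ hammingBallOn K (univ : Finset ι) ρ \ hammingBallOn K s ρ := fun R =>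
    mem_sdiff.mpr ⟨by simpa using hFρ R, fun hR => hnone _ hR (by rw [hF])⟩
  have hsub : hammingBallOn K s ρ ⊆ hammingBallOn K (univ : Finset ι) ρ := fun e he => by
    simpa using (mem_hammingBallOn.mp he).1
  have hle := card_le_card_of_injOn (s := univ) F (fun R _ => hFout R) hFinj.injOn
  rw [card_univ, card_sdiff_of_subset hsub] at hle
  have := card_le_card hsub
  omega

end HammingBall

section Syndrome

variable {ι K M N : Type*} [Fintype ι] [Ring K] [DecidableEq K]
  [AddCommGroup M] [Module K M] [AddCommGroup N] [Module K N]

theorem exists_hammingNorm_le_map_eq {S : (ι → K) →ₗ[K] M} {ρ : ℕ}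
    (hcov : ∀ v, ∃ c ∈ LinearMap.ker S, hammingDist v c ≤ ρ) (hS : Surjective S) (t : M) :
    ∃ e, hammingNorm e ≤ ρ ∧ S e = t := by
  obtain ⟨v, rfl⟩ := hS t
  obtain ⟨c, hc, hvc⟩ := hcov v
  refine ⟨v - c, ?_, ?_⟩
  · rwa [← neg_add_eq_sub, ← hammingDist_eq_hammingNorm, hammingDist_comm]
  · rw [map_sub, LinearMap.mem_ker.mp hc, sub_zero]

theorem exists_wetPaper_solution_of_card_lt [DecidableEq ι] [Fintype K] [Fintype N]
    {S : (ι → K) →ₗ[K] M × N} {ρ : ℕ}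
    (hcov : ∀ v, ∃ c ∈ LinearMap.ker S, hammingDist v c ≤ ρ) (hS : Surjective S)
    (x : ι → K) (m : M) (I : Finset ι)
    (hcard : #(hammingBallOn K (univ : Finset ι) ρ) < Fintype.card N + #(hammingBallOn K Iᶜ ρ)) :
    ∃ y R, S y = (m, R) ∧ hammingDist x y ≤ ρ ∧ ∀ i ∈ I, y i = x i := by
  obtain ⟨e, he, hem⟩ := exists_mem_hammingBallOn_fst_eq
    (exists_hammingNorm_le_map_eq hcov hS) (m - (S x).1) Iᶜ hcard
  obtain ⟨heρ, heI⟩ := mem_hammingBallOn.mp he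
  refine ⟨x + e, (S (x + e)).2, Prod.ext ?_ rfl, ?_, fun i hi => ?_⟩
  · rw [map_add, Prod.fst_add, hem, add_sub_cancel]
  · rwa [hammingDist_eq_hammingNorm, neg_add_cancel_left]
  · simp [heI i (by simpa using hi)]

end Syndrome

theorem sum_range_three_choose_mul_two_pow (n : ℕ) :
    ∑ j ∈ range 3, n.choose j * 2 ^ j = 2 * n ^ 2 + 1 := by
  induction n with
  | zero => rfl
  | succ n ih =>
    simp only [sum_range_succ, sum_range_zero, Nat.reduceAdd, Nat.choose_succ_succ',
      Nat.choose_zero_right, Nat.choose_one_right] at ih ⊢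
    linear_combination ih

theorem randomized_wet_paper_ternary_golay_general
    (r ℓ : ℕ)
    (C : Submodule (ZMod 3) (Fin 11 → ZMod 3))
    (hperf : ∀ v : Fin 11 → ZMod 3, ∃! c, c ∈ C ∧ hammingDist v c ≤ 2)
    (S : (Fin 11 → ZMod 3) →ₗ[ZMod 3] (Fin (5 - r) → ZMod 3) × (Fin r → ZMod 3))
    (hS_surj : Function.Surjective S)
    (hS_ker : LinearMap.ker S = C)
    (hineq : (1 + 44 * ℓ - 2 * ℓ ^ 2 : ℤ) ≤ 3 ^ r) :
    ∀ (x : Fin 11 → ZMod 3) (m : Fin (5 - r) → ZMod 3) (I : Finset (Fin 11)), I.card = ℓ →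
      ∃ (y : Fin 11 → ZMod 3) (R : Fin r → ZMod 3),
        S y = (m, R) ∧ hammingDist x y ≤ 2 ∧ ∀ i ∈ I, y i = x i := by
  intro x m I hI
  have hcov : ∀ v, ∃ c ∈ LinearMap.ker S, hammingDist v c ≤ 2 := fun v => by
    obtain ⟨c, ⟨hc, hvc⟩, -⟩ := hperf v
    exact ⟨c, hS_ker ▸ hc, hvc⟩
  refine exists_wetPaper_solution_of_card_lt hcov hS_surj x m I ?_
  have hℓ : ℓ ≤ 11 := hI ▸ card_le_univ I
  rw [card_hammingBallOn, card_hammingBallOn, card_compl, hI, card_univ, Fintype.card_fin,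
    Fintype.card_pi, prod_const, card_univ, Fintype.card_fin, ZMod.card]
  simp only [Nat.reduceAdd, Nat.reduceSub, sum_range_three_choose_mul_two_pow]
  zify [hℓ]
  linarith

/-- For the ternary `[11,6]` Golay code (perfect with radius 2), if
`3^r ≥ 1 + 44ℓ - 2ℓ²` (and `ℓ ≤ 11`), the randomized wet paper syndrome coding problem
always has a solution for any `ℓ` locked coordinates. -/
theorem randomized_wet_paper_ternary_golay
    (r ℓ : ℕ) (hr : r ≤ 5)
    (C : Submodule (ZMod 3) (Fin 11 → ZMod 3))
    (hk : Module.finrank (ZMod 3) C = 6)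
    (hperf : ∀ v : Fin 11 → ZMod 3, ∃! c, c ∈ C ∧ hammingDist v c ≤ 2)
    (S : (Fin 11 → ZMod 3) →ₗ[ZMod 3] (Fin (5 - r) → ZMod 3) × (Fin r → ZMod 3))
    (hS_surj : Function.Surjective S)
    (hS_ker : LinearMap.ker S = C)
    (hℓ : ℓ ≤ 11)
    (hineq : (1 + 44 * ℓ - 2 * ℓ ^ 2 : ℤ) ≤ 3 ^ r) :
    ∀ (x : Fin 11 → ZMod 3) (m : Fin (5 - r) → ZMod 3) (I : Finset (Fin 11)), I.card = ℓ →
      ∃ (y : Fin 11 → ZMod 3) (R : Fin r → ZMod 3),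
        S y = (m, R) ∧ hammingDist x y ≤ 2 ∧ ∀ i ∈ I, y i = x i :=
  randomized_wet_paper_ternary_golay_general r ℓ C hperf S hS_surj hS_ker hineq
end

section
/- Let C be a linear code of length n and dimension k over a finite field F_q, let S : F_q^n → F_q^{n-k} be a surjective linear map whose kernel is C, and let D = C^⊥ be the dual code of C (which has dimension k⊥ = n - k), with minimum distance d⊥ satisfying k⊥ + d⊥ = n + 1 - g for a nonnegative integer g. Then for every x ∈ F_q^n and every set I ⊆ {1,…,n} of wet (locked) coordinates with |I| = ℓ ≥ d⊥ - 1, the set of achievable syndromes {S(y) : y ∈ F_q^n, y_i = x_i for all i ∈ I} is a coset of a linear subspace of F_q^{n-k} of dimension at least n - ℓ - g; hence one can surely embed n - ℓ - g symbols of F_q regardless of the positions of the wet coordinates. -/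
/-!
The achievable syndromes are `S x + S(W)`, where `W` is the space of vectors vanishing on the wet
set `I`, and `dim S(W) = (n - ℓ) - dim (C ∩ W)`. A nonzero functional on `d⊥ - 1` coordinates
vanishing on `C`, extended by zero, would be a nonzero word of `C^⊥` of weight below `d⊥`. So `C`
projects onto any `d⊥ - 1` coordinates, its projection to `I` has dimension at least `d⊥ - 1`, and
`dim (C ∩ W) ≤ k - (d⊥ - 1) = g`.
-/

open Module LinearMap

section

variable {K : Type*} [Field K]

theorem finrank_map_add_finrank_inf_ker {V W : Type*} [AddCommGroup V] [Module K V]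
    [AddCommGroup W] [Module K W] (f : V →ₗ[K] W) (p : Submodule K V) [FiniteDimensional K p] :
    finrank K (p.map f) + finrank K ↥(p ⊓ ker f) = finrank K p := by
  have h := finrank_range_add_finrank_ker (f.domRestrict p)
  have hker : Submodule.comap p.subtype (p ⊓ ker f) = Submodule.comap p.subtype (ker f) := by
    rw [Submodule.comap_inf, Submodule.comap_subtype_self, top_inf_eq]
  rwa [range_domRestrict, ker_domRestrict, ← hker,
    (Submodule.comapSubtypeEquivOfLe inf_le_left).finrank_eq] at h

theorem exists_ne_zero_dotProduct_eq_zero_of_ne_top {σ : Type*} [Fintype σ]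
    {U : Submodule K (σ → K)} (hU : U ≠ ⊤) : ∃ w ≠ 0, ∀ u ∈ U, w ⬝ᵥ u = 0 := by
  classical
  obtain ⟨φ, hφ0, hφU⟩ := Submodule.exists_dual_map_eq_bot_of_lt_top hU.lt_top inferInstance
  refine ⟨(dotProductEquiv K σ).symm φ, by simpa using hφ0, fun u hu => ?_⟩
  calc _ = dotProductEquiv K σ ((dotProductEquiv K σ).symm φ) u := rfl
    _ = 0 := by
      rw [LinearEquiv.apply_symm_apply]
      exact (Submodule.mem_bot K).1 (hφU ▸ Submodule.mem_map_of_mem hu)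

variable {ι : Type*}

def coordRestrict (s : Finset ι) : (ι → K) →ₗ[K] (s → K) := funLeft K K Subtype.val

@[simp]
theorem coordRestrict_apply (s : Finset ι) (u : ι → K) (i : s) : coordRestrict s u i = u i := rfl

theorem mem_ker_coordRestrict {s : Finset ι} {u : ι → K} :
    u ∈ ker (coordRestrict s) ↔ ∀ i ∈ s, u i = 0 := by
  simp [funext_iff]

theorem setOf_apply_eq_image_map_ker_coordRestrict {M : Type*} [AddCommGroup M]
    [Module K M] (f : (ι → K) →ₗ[K] M) (s : Finset ι) (x : ι → K) :
    {m | ∃ y : ι → K, (∀ i ∈ s, y i = x i) ∧ f y = m} =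
      (fun v => f x + v) '' (ker (coordRestrict s) |>.map f : Set M) := by
  ext m
  simp only [Set.mem_ofPred_eq, Set.mem_image, SetLike.mem_coe, Submodule.mem_map,
    mem_ker_coordRestrict]
  constructor
  · rintro ⟨y, hy, rfl⟩
    exact ⟨f (y - x), ⟨y - x, fun i hi => sub_eq_zero_of_eq (hy i hi), rfl⟩, by simp⟩
  · rintro ⟨-, ⟨u, hu, rfl⟩, rfl⟩
    exact ⟨x + u, fun i hi => by simp [hu i hi], map_add f x u⟩

variable [Fintype ι]

theorem finrank_ker_coordRestrict (s : Finset ι) :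
    finrank K (ker (coordRestrict (K := K) s)) + s.card = Fintype.card ι := by
  have hsurj : range (coordRestrict (K := K) s) = ⊤ :=
    range_eq_top.2 (funLeft_surjective_of_injective _ _ _ Subtype.val_injective)
  have h := finrank_range_add_finrank_ker (coordRestrict (K := K) s)
  rw [hsurj, finrank_top, finrank_fintype_fun_eq_card, finrank_fintype_fun_eq_card,
    Fintype.card_coe] at h
  omega

theorem dotProduct_extend_zero (s : Finset ι) (w : s → K) (c : ι → K) :
    Function.extend Subtype.val w 0 ⬝ᵥ c = w ⬝ᵥ coordRestrict s c := by
  rw [dotProduct, ← Finset.sum_subset s.subset_univ, ← Finset.sum_coe_sort]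
  · simp [dotProduct]
  · intro i _ hi
    rw [Function.extend_apply' _ _ _ (by simpa using hi), Pi.zero_apply, zero_mul]

theorem hammingNorm_extend_zero_le [DecidableEq K] (s : Finset ι) (w : s → K) :
    hammingNorm (Function.extend Subtype.val w 0) ≤ s.card := by
  refine Finset.card_le_card fun i hi => ?_
  by_contra his
  refine (Finset.mem_filter.1 hi).2 ?_
  exact Function.extend_apply' _ _ _ (by simpa using his)

variable [DecidableEq K] {C : Submodule K (ι → K)} {t : ℕ}

theorem map_coordRestrict_eq_top_of_card_le
    (ht : ∀ z : ι → K, z ≠ 0 → (∀ c ∈ C, z ⬝ᵥ c = 0) → t < hammingNorm z)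
    {s : Finset ι} (hs : s.card ≤ t) : C.map (coordRestrict s) = ⊤ := by
  by_contra hne
  obtain ⟨w, hw0, hwC⟩ := exists_ne_zero_dotProduct_eq_zero_of_ne_top hne
  have hz0 : Function.extend Subtype.val w 0 ≠ 0 := fun hz =>
    hw0 <| funext fun i => by
      rw [← Subtype.val_injective.extend_apply w 0 i, hz, Pi.zero_apply, Pi.zero_apply]
  have hzC : ∀ c ∈ C, Function.extend Subtype.val w 0 ⬝ᵥ c = 0 := fun c hc => by
    rw [dotProduct_extend_zero]
    exact hwC _ (Submodule.mem_map_of_mem hc)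
  have := ht _ hz0 hzC
  have := hammingNorm_extend_zero_le s w
  omega

theorem min_le_finrank_map_coordRestrict
    (ht : ∀ z : ι → K, z ≠ 0 → (∀ c ∈ C, z ⬝ᵥ c = 0) → t < hammingNorm z) (s : Finset ι) :
    min t s.card ≤ finrank K (C.map (coordRestrict s)) := by
  obtain ⟨T, hTs, hT⟩ := Finset.exists_subset_card_eq (min_le_right t s.card)
  have hfactor : coordRestrict (K := K) T =
      (funLeft K K (Set.inclusion hTs)).comp (coordRestrict s) := rfl
  calc min t s.card = finrank K (C.map (coordRestrict T)) := by
        rw [map_coordRestrict_eq_top_of_card_le ht (hT.trans_le (min_le_left _ _)), finrank_top,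
          finrank_fintype_fun_eq_card, Fintype.card_coe, hT]
    _ ≤ finrank K (C.map (coordRestrict s)) := by
        rw [hfactor, Submodule.map_comp]
        exact Submodule.finrank_map_le _ _

end

theorem wet_paper_achievable_syndromes_coset_general
    (n k ℓ dperp g : ℕ) (F : Type) [Field F] [DecidableEq F]
    (C : Submodule F (Fin n → F)) (hk : Module.finrank F C = k)
    (S : (Fin n → F) →ₗ[F] (Fin (n - k) → F))
    (hS_ker : LinearMap.ker S = C)
    (D : Submodule F (Fin n → F))
    (hD : ∀ z, z ∈ D ↔ ∀ c ∈ C, ∑ i, z i * c i = 0)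
    (hd_lb : ∀ c ∈ D, c ≠ 0 → dperp ≤ hammingNorm c)
    (hg : (n - k) + dperp + g = n + 1)
    (hℓ : dperp - 1 ≤ ℓ)
    (x : Fin n → F) (I : Finset (Fin n)) (hI : I.card = ℓ) :
    ∃ V : Submodule F (Fin (n - k) → F),
      (n : ℤ) - ℓ - g ≤ Module.finrank F V ∧
      {s : Fin (n - k) → F | ∃ y : Fin n → F, (∀ i ∈ I, y i = x i) ∧ S y = s}
        = (fun v => S x + v) '' (V : Set (Fin (n - k) → F)) := by
  have hkn : k ≤ n := hk ▸ (Submodule.finrank_le C).trans_eq (finrank_fin_fun F)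
  have hstrength : min (dperp - 1) ℓ ≤ finrank F (C.map (coordRestrict I)) :=
    hI ▸ min_le_finrank_map_coordRestrict (fun z hz hzC => by
      have := hd_lb z ((hD z).2 hzC) hz
      have := hammingNorm_pos_iff.2 hz
      omega) I
  have hC := finrank_map_add_finrank_inf_ker (coordRestrict I) C
  have hW := finrank_map_add_finrank_inf_ker S (ker (coordRestrict I))
  have hWdim := finrank_ker_coordRestrict (K := F) I
  rw [hk] at hC
  rw [hS_ker, inf_comm] at hW
  rw [Fintype.card_fin, hI] at hWdim
  refine ⟨(ker (coordRestrict I)).map S, ?_, setOf_apply_eq_image_map_ker_coordRestrict S I x⟩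
  omega

/-- Wet paper coding via the dual distance: if the dual code `D = C^⊥` has
dimension `k⊥ = n - k` and minimum distance `d⊥` with `k⊥ + d⊥ = n + 1 - g`, then for any
`ℓ ≥ d⊥ - 1` wet coordinates the set of achievable syndromes is a coset of a subspace of
dimension at least `n - ℓ - g`; hence `n - ℓ - g` symbols can surely be embedded. -/
theorem wet_paper_achievable_syndromes_coset
    (q n k ℓ dperp g : ℕ) (F : Type) [Field F] [Fintype F] [DecidableEq F]
    (hq : Fintype.card F = q)
    (C : Submodule F (Fin n → F)) (hk : Module.finrank F C = k)
    (S : (Fin n → F) →ₗ[F] (Fin (n - k) → F))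
    (hS_surj : Function.Surjective S)
    (hS_ker : LinearMap.ker S = C)
    (D : Submodule F (Fin n → F))
    (hD : ∀ z, z ∈ D ↔ ∀ c ∈ C, ∑ i, z i * c i = 0)
    (hkperp : Module.finrank F D = n - k)
    (hd_lb : ∀ c ∈ D, c ≠ 0 → dperp ≤ hammingNorm c)
    (hd_ex : ∃ c ∈ D, c ≠ 0 ∧ hammingNorm c = dperp)
    (hg : (n - k) + dperp + g = n + 1)
    (hℓ : dperp - 1 ≤ ℓ)
    (x : Fin n → F) (I : Finset (Fin n)) (hI : I.card = ℓ) :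
    ∃ V : Submodule F (Fin (n - k) → F),
      (n : ℤ) - ℓ - g ≤ Module.finrank F V ∧
      {s : Fin (n - k) → F | ∃ y : Fin n → F, (∀ i ∈ I, y i = x i) ∧ S y = s}
        = (fun v => S x + v) '' (V : Set (Fin (n - k) → F)) :=
  wet_paper_achievable_syndromes_coset_general n k ℓ dperp g F C hk S hS_ker D hD hd_lb hg hℓ x I hI
end
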